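/- arXiv:2303.03095 — 4 statements merged into one kernel-verified Lean document; each statement's English description precedes it below -/
import Mathlib

section
/- Let H ≥ 1 and define α_t = (H+1)/(H+t) and α_t^j = α_j ∏_{k=j+1}^{t}(1-α_k) for 1 ≤ j ≤ t (empty product equals 1). Then for every fixed j ≥ 1, the infinite series ∑_{t=j}^{∞} α_t^j converges and equals 1 + 1/H. -/
/-!
With `1 - α k = (k - 1) / (H + k)`, the weight `α_t^j` is `α j` times
`P t = ∏_{k=j+1}^t (k - 1) / (H + k)`, and `P` telescopes: `P t = u t - u (t + 1)` for the
potential `u t = (t + H) / H * P t`. Hence the series sums to `α j * (u j - lim u) = α j * u j`,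
which is `1 + 1 / H`. The limit vanishes because `u (t + 1) = t / (t + H) * u t`, so for `H ≥ 1`
the sequence `t * u t` is nonincreasing and `u t = O(1 / t)`.
-/

open Filter Topology Finset

lemma hasSum_sub_succ_of_antitone {u : ℕ → ℝ} (hu : Antitone u) (h : Tendsto u atTop (𝓝 0)) :
    HasSum (fun n => u n - u (n + 1)) (u 0) := by
  rw [hasSum_iff_tendsto_nat_of_nonneg fun n => sub_nonneg.2 (hu n.le_succ)]
  simp_rw [sum_range_sub']
  simpa using (tendsto_const_nhds (x := u 0)).sub h

lemma hasSum_ite_sub_succ {u : ℕ → ℝ} {j : ℕ} (hu : ∀ n, j ≤ n → u (n + 1) ≤ u n)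
    (h : Tendsto u atTop (𝓝 0)) :
    HasSum (fun n => if j ≤ n then u n - u (n + 1) else 0) (u j) := by
  -- freezing `u` at its value `u j` before time `j` turns the series into a plain telescoping one
  set w : ℕ → ℝ := fun n => u (max n j)
  have hdiff (n : ℕ) : w n - w (n + 1) = if j ≤ n then u n - u (n + 1) else 0 := by
    split_ifs with hjn
    · simp [w, hjn, hjn.trans n.le_succ]
    · simp [w, max_eq_right (not_le.1 hjn).le, max_eq_right (Nat.succ_le_of_lt (not_le.1 hjn))]
  have hw : Antitone w := antitone_nat_of_succ_le fun n => sub_nonneg.1 <| by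
    rw [hdiff]
    split_ifs with hjn
    exacts [sub_nonneg.2 (hu n hjn), le_rfl]
  simp_rw [← hdiff]
  simpa [w] using hasSum_sub_succ_of_antitone hw
    (h.comp (tendsto_atTop_mono (fun n => le_max_left n j) tendsto_id))

noncomputable def tailProd (H : ℝ) (j n : ℕ) : ℝ :=
  ∏ k ∈ Icc (j + 1) n, ((k : ℝ) - 1) / (H + k)

noncomputable def tailPotential (H : ℝ) (j n : ℕ) : ℝ :=
  (n + H) / H * tailProd H j n

section

variable {H : ℝ} {j n : ℕ}

@[simp]
lemma tailProd_self : tailProd H j j = 1 := by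
  simp [tailProd]

lemma tailProd_succ (hjn : j ≤ n) :
    tailProd H j (n + 1) = tailProd H j n * (n / (H + (n + 1))) := by
  rw [tailProd, tailProd, prod_Icc_succ_top (by omega)]
  push_cast
  rw [add_sub_cancel_right]

lemma tailProd_nonneg (hH : 0 ≤ H) : 0 ≤ tailProd H j n :=
  prod_nonneg fun k hk => by
    have : (1 : ℝ) ≤ k := by exact_mod_cast (le_add_self.trans (mem_Icc.1 hk).1 : 1 ≤ k)
    exact div_nonneg (by linarith) (by positivity)

lemma tailPotential_nonneg (hH : 0 < H) : 0 ≤ tailPotential H j n :=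
  mul_nonneg (by positivity) (tailProd_nonneg hH.le)

lemma tailPotential_sub_succ (hH : 0 < H) (hjn : j ≤ n) :
    tailPotential H j n - tailPotential H j (n + 1) = tailProd H j n := by
  rw [tailPotential, tailPotential, tailProd_succ hjn]
  push_cast
  field_simp
  ring

lemma tailPotential_succ (hH : 0 < H) (hjn : j ≤ n) :
    tailPotential H j (n + 1) = n / (n + H) * tailPotential H j n := by
  rw [tailPotential, tailPotential, tailProd_succ hjn]
  push_cast
  field_simp
  ring

lemma tailPotential_succ_le (hH : 0 < H) (hjn : j ≤ n) :
    tailPotential H j (n + 1) ≤ tailPotential H j n :=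
  sub_nonneg.1 <| (tailPotential_sub_succ hH hjn).symm ▸ tailProd_nonneg hH.le

lemma natCast_mul_tailPotential_le (hH : 1 ≤ H) (hjn : j ≤ n) :
    n * tailPotential H j n ≤ j * tailPotential H j j := by
  induction n, hjn using Nat.le_induction with
  | base => rfl
  | succ n hjn ih =>
    have hH0 : 0 < H := by linarith
    refine le_trans ?_ ih
    rw [tailPotential_succ hH0 hjn, ← mul_assoc]
    gcongr
    · exact tailPotential_nonneg hH0
    · push_cast
      rw [← mul_div_assoc, div_le_iff₀ (by positivity)]
      nlinarith [(n.cast_nonneg : (0 : ℝ) ≤ n)]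

lemma tendsto_tailPotential (hH : 1 ≤ H) : Tendsto (tailPotential H j) atTop (𝓝 0) := by
  have hH0 : 0 < H := by linarith
  refine tendsto_of_tendsto_of_tendsto_of_le_of_le' tendsto_const_nhds
    (tendsto_const_div_atTop_nhds_zero_nat (j * tailPotential H j j))
    (Eventually.of_forall fun n => tailPotential_nonneg hH0) ?_
  filter_upwards [eventually_ge_atTop j, eventually_ge_atTop 1] with n hjn hn
  rw [le_div_iff₀ (by exact_mod_cast hn), mul_comm]
  exact natCast_mul_tailPotential_le hH hjn

end

theorem weights_series_sum_general
    (H : ℝ) (hH : 1 ≤ H)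
    (α : ℕ → ℝ) (hα : ∀ t, α t = (H + 1) / (H + t))
    (αj : ℕ → ℕ → ℝ)
    (hαj : ∀ j t, αj j t = α j * ∏ k ∈ Finset.Icc (j + 1) t, (1 - α k))
    (j : ℕ) :
    HasSum (fun t : ℕ => if j ≤ t then αj j t else 0) (1 + 1 / H) := by
  have hH0 : 0 < H := by linarith
  have hfactor (k : ℕ) : 1 - α k = ((k : ℝ) - 1) / (H + k) := by
    rw [hα]
    field_simp
    ring
  have hterm : (fun t => if j ≤ t then αj j t else 0) = fun t =>
      α j * if j ≤ t then tailPotential H j t - tailPotential H j (t + 1) else 0 := by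
    funext t
    split_ifs with hjt
    · simp only [hαj, hfactor, tailPotential_sub_succ hH0 hjt, tailProd]
    · rw [mul_zero]
  have hvalue : α j * tailPotential H j j = 1 + 1 / H := by
    rw [hα, tailPotential, tailProd_self]
    field_simp
    ring
  rw [hterm, ← hvalue]
  exact (hasSum_ite_sub_succ (fun n => tailPotential_succ_le hH0)
    (tendsto_tailPotential hH)).mul_left (α j)

theorem weights_series_sum
    (H : ℝ) (hH : 1 ≤ H)
    (α : ℕ → ℝ) (hα : ∀ t, α t = (H + 1) / (H + t))
    (αj : ℕ → ℕ → ℝ)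
    (hαj : ∀ j t, αj j t = α j * ∏ k ∈ Finset.Icc (j + 1) t, (1 - α k))
    (j : ℕ) (hj : 1 ≤ j) :
    HasSum (fun t : ℕ => if j ≤ t then αj j t else 0) (1 + 1 / H) :=
  weights_series_sum_general H hH α hα αj hαj j
end

section
/- Let H ≥ 1 and define α_t = (H+1)/(H+t) and α_t^j = α_j ∏_{k=j+1}^{t}(1-α_k) for 1 ≤ j ≤ t. Then for all t ≥ 1 and 1 ≤ j ≤ t, it holds that α_t^j ≤ α_t and α_{t+1}^j ≤ α_t^j. -/
/-!
For any step sizes with `0 ≤ a k` and `a (k + 1) ≤ 1`, the weight `a j ∏_{k=j+1}^t (1 - a k)`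
is multiplied by `1 - a (t + 1) ∈ [0, 1]` when `t` grows, so it decreases in `t`; and the bound
by `a t` propagates from the equality at `t = j` as soon as `a n (1 - a (n + 1)) ≤ a (n + 1)`.
For `a t = (H + 1) / (H + t)` the left side of this is `a (n + 1) · n / (H + n)`, so it holds once
`H ≥ 0`.
-/

open Finset

noncomputable section

def averagingWeight (a : ℕ → ℝ) (j t : ℕ) : ℝ :=
  a j * ∏ k ∈ Icc (j + 1) t, (1 - a k)

namespace averagingWeight

variable {a : ℕ → ℝ} {j t : ℕ}

@[simp]
theorem self (a : ℕ → ℝ) (j : ℕ) : averagingWeight a j j = a j := by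
  simp [averagingWeight]

theorem succ (a : ℕ → ℝ) (hjt : j ≤ t) :
    averagingWeight a j (t + 1) = averagingWeight a j t * (1 - a (t + 1)) := by
  rw [averagingWeight, averagingWeight, prod_Icc_succ_top (by omega), mul_assoc]

theorem nonneg (h0 : ∀ k, 0 ≤ a k) (h1 : ∀ k, a (k + 1) ≤ 1) (j t : ℕ) :
    0 ≤ averagingWeight a j t := by
  refine mul_nonneg (h0 j) (prod_nonneg fun k hk => ?_)
  obtain ⟨m, rfl⟩ : ∃ m, k = m + 1 := ⟨k - 1, by grind⟩
  linarith [h1 m]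

theorem succ_le (h0 : ∀ k, 0 ≤ a k) (h1 : ∀ k, a (k + 1) ≤ 1) (hjt : j ≤ t) :
    averagingWeight a j (t + 1) ≤ averagingWeight a j t := by
  rw [succ a hjt]
  exact mul_le_of_le_one_right (nonneg h0 h1 j t) (by linarith [h0 (t + 1)])

theorem le_of_mul_one_sub_le (h1 : ∀ k, a (k + 1) ≤ 1)
    (hstep : ∀ n, a n * (1 - a (n + 1)) ≤ a (n + 1)) (hjt : j ≤ t) :
    averagingWeight a j t ≤ a t := by
  induction t, hjt using Nat.le_induction with
  | base => simp
  | succ n hjn ih =>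
    calc averagingWeight a j (n + 1) = averagingWeight a j n * (1 - a (n + 1)) := succ a hjn
      _ ≤ a n * (1 - a (n + 1)) := mul_le_mul_of_nonneg_right ih (by linarith [h1 n])
      _ ≤ a (n + 1) := hstep n

end averagingWeight

def jinStepSize (H : ℝ) (t : ℕ) : ℝ :=
  (H + 1) / (H + t)

namespace jinStepSize

variable {H : ℝ}

theorem nonneg (hH : 0 ≤ H) (t : ℕ) : 0 ≤ jinStepSize H t := by
  unfold jinStepSize
  positivity

theorem succ_le_one (hH : 0 ≤ H) (t : ℕ) : jinStepSize H (t + 1) ≤ 1 := by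
  unfold jinStepSize
  push_cast
  exact div_le_one_of_le₀ (by linarith [t.cast_nonneg (α := ℝ)]) (by positivity)

theorem one_sub_succ (hH : 0 ≤ H) (t : ℕ) :
    1 - jinStepSize H (t + 1) = t / (H + (t + 1)) := by
  unfold jinStepSize
  push_cast
  field_simp
  ring

theorem mul_one_sub_succ_le (hH : 0 ≤ H) (t : ℕ) :
    jinStepSize H t * (1 - jinStepSize H (t + 1)) ≤ jinStepSize H (t + 1) := by
  have ht : (t : ℝ) / (H + t) ≤ 1 := div_le_one_of_le₀ (by linarith) (by positivity)
  calc jinStepSize H t * (1 - jinStepSize H (t + 1))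
      = jinStepSize H (t + 1) * (t / (H + t)) := by
        rw [one_sub_succ hH, jinStepSize, jinStepSize]
        push_cast
        ring
    _ ≤ jinStepSize H (t + 1) := mul_le_of_le_one_right (nonneg hH _) ht

end jinStepSize

end

theorem weights_monotonicity_general
    (H : ℝ) (hH : 1 ≤ H)
    (α : ℕ → ℝ) (hα : ∀ t, α t = (H + 1) / (H + t))
    (αj : ℕ → ℕ → ℝ)
    (hαj : ∀ j t, αj j t = α j * ∏ k ∈ Finset.Icc (j + 1) t, (1 - α k))
    (t : ℕ) (j : ℕ) (hjt : j ≤ t) :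
    αj j t ≤ α t ∧ αj j (t + 1) ≤ αj j t := by
  obtain rfl : α = jinStepSize H := funext hα
  obtain rfl : αj = averagingWeight (jinStepSize H) := funext₂ hαj
  have hH0 : 0 ≤ H := by linarith
  have h0 := jinStepSize.nonneg hH0
  have h1 := jinStepSize.succ_le_one hH0
  exact ⟨averagingWeight.le_of_mul_one_sub_le h1 (jinStepSize.mul_one_sub_succ_le hH0) hjt,
    averagingWeight.succ_le h0 h1 hjt⟩

theorem weights_monotonicity
    (H : ℝ) (hH : 1 ≤ H)
    (α : ℕ → ℝ) (hα : ∀ t, α t = (H + 1) / (H + t))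
    (αj : ℕ → ℕ → ℝ)
    (hαj : ∀ j t, αj j t = α j * ∏ k ∈ Finset.Icc (j + 1) t, (1 - α k))
    (t : ℕ) (ht : 1 ≤ t) (j : ℕ) (hj1 : 1 ≤ j) (hjt : j ≤ t) :
    αj j t ≤ α t ∧ αj j (t + 1) ≤ αj j t :=
  weights_monotonicity_general H hH α hα αj hαj t j hjt
end

section
/- Let Δ_A ⊆ ℝ^A denote the standard probability simplex, let u ∈ ℝ^A, and let x ∈ Δ_A be such that the support of x is contained in the set of coordinates minimizing u, i.e., x(a) > 0 implies u(a) = min_{a'} u(a'). Then for every stepsize η > 0, the Euclidean projection of x − η·u onto Δ_A equals x. -/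
open scoped RealInnerProductSpace

/-! A point whose support lies in the minimizers of `u` minimizes the linear cost `⟪u, ·⟫` over
the simplex, so `x - η • u` lies in the normal cone of the simplex at `x`; by the obtuse-angle
criterion, `x` is then the unique nearest point of the simplex to `x - η • u`. -/

theorem eq_of_norm_sub_le_of_inner_sub_nonpos {E : Type*} [NormedAddCommGroup E]
    [InnerProductSpace ℝ E] {v x p : E} (hangle : ⟪v - x, p - x⟫ ≤ 0)
    (hnear : ‖v - p‖ ≤ ‖v - x‖) : p = x := by
  have hexpand : ‖v - p‖ ^ 2 = ‖v - x‖ ^ 2 - 2 * ⟪v - x, p - x⟫ + ‖p - x‖ ^ 2 := by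
    rw [← norm_sub_sq_real, sub_sub_sub_cancel_right]
  have hsq : ‖v - p‖ ^ 2 ≤ ‖v - x‖ ^ 2 := pow_le_pow_left₀ (norm_nonneg _) hnear 2
  have hzero : ‖p - x‖ ^ 2 ≤ 0 := by linarith
  rw [← sub_eq_zero, ← norm_eq_zero]
  nlinarith [norm_nonneg (p - x)]

theorem sum_mul_le_sum_mul_of_support_subset_argmin {ι : Type*} [Fintype ι] {u x q : ι → ℝ}
    (hx : x ∈ stdSimplex ℝ ι) (hq : q ∈ stdSimplex ℝ ι)
    (hsupp : ∀ a, 0 < x a → ∀ b, u a ≤ u b) :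
    ∑ a, x a * u a ≤ ∑ b, q b * u b := by
  have hterm : ∀ a b, x a * q b * u a ≤ x a * q b * u b := by
    intro a b
    rcases (hx.1 a).lt_or_eq with hpos | hzero
    · exact mul_le_mul_of_nonneg_left (hsupp a hpos b) (mul_nonneg hpos.le (hq.1 b))
    · simp [← hzero]
  -- Both costs are double sums against the weights `x a * q b`, compared termwise.
  calc ∑ a, x a * u a = ∑ a, ∑ b, x a * q b * u a := by
        simp_rw [mul_right_comm _ _ (u _), ← Finset.mul_sum, ← Finset.sum_mul, hq.2, mul_one]
    _ ≤ ∑ a, ∑ b, x a * q b * u b :=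
        Finset.sum_le_sum fun a _ => Finset.sum_le_sum fun b _ => hterm a b
    _ = ∑ b, q b * u b := by
        rw [Finset.sum_comm]
        simp_rw [mul_comm (x _), mul_assoc, ← Finset.mul_sum, ← Finset.sum_mul, hx.2, one_mul]

theorem proj_simplex_fixed_at_equilibrium_general
    (A : ℕ)
    (u x : EuclideanSpace ℝ (Fin A))
    (hx : (∀ a, 0 ≤ x a) ∧ ∑ a, x a = 1)
    (hsupp : ∀ a, 0 < x a → ∀ a', u a ≤ u a')
    (η : ℝ) (hη : 0 < η)
    (p : EuclideanSpace ℝ (Fin A))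
    (hpmem : (∀ a, 0 ≤ p a) ∧ ∑ a, p a = 1)
    (hpnear : ∀ q : EuclideanSpace ℝ (Fin A),
      ((∀ a, 0 ≤ q a) ∧ ∑ a, q a = 1) → ‖x - η • u - p‖ ≤ ‖x - η • u - q‖) :
    p = x := by
  have hcost : ⟪u, x⟫ ≤ ⟪u, p⟫ := by
    simpa [PiLp.inner_apply] using
      sum_mul_le_sum_mul_of_support_subset_argmin (u := fun a => u a) (x := fun a => x a)
        (q := fun a => p a) hx hpmem hsupp
  refine eq_of_norm_sub_le_of_inner_sub_nonpos ?_ (hpnear x hx)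
  rw [sub_sub_cancel_left, inner_neg_left, real_inner_smul_left, inner_sub_right]
  exact neg_nonpos.2 (mul_nonneg hη.le (sub_nonneg.2 hcost))

/-- If the support of `x ∈ Δ_A` is contained in the set of minimizers of `u`,
then the Euclidean projection of `x - η • u` onto the simplex equals `x`.
The projection is characterized as the nearest point of the simplex. -/
theorem proj_simplex_fixed_at_equilibrium
    (A : ℕ) (hA : 0 < A)
    (u x : EuclideanSpace ℝ (Fin A))
    (hx : (∀ a, 0 ≤ x a) ∧ ∑ a, x a = 1)
    (hsupp : ∀ a, 0 < x a → ∀ a', u a ≤ u a')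
    (η : ℝ) (hη : 0 < η)
    (p : EuclideanSpace ℝ (Fin A))
    (hpmem : (∀ a, 0 ≤ p a) ∧ ∑ a, p a = 1)
    (hpnear : ∀ q : EuclideanSpace ℝ (Fin A),
      ((∀ a, 0 ≤ q a) ∧ ∑ a, q a = 1) → ‖x - η • u - p‖ ≤ ‖x - η • u - q‖) :
    p = x :=
  proj_simplex_fixed_at_equilibrium_general A u x hx hsupp η hη p hpmem hpnear
end

section
/- Let c ∈ (0, 1), D ≥ 1, and let k be a positive integer with 2^k ≥ (6/c)·(log(D) + 1). Then (1 − c/3)^{4^k − 1} ≤ D^{−2^{k+1}}. -/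
/-- The fast-phase decrease over `4^k - 1` steps compensates the geometric
blow-up factor `D` per step over the subsequent `2^(k+1)` slow-phase steps. -/
theorem fast_phase_compensates_blowup
    (c D : ℝ) (hc0 : 0 < c) (hc1 : c < 1) (hD : 1 ≤ D)
    (k : ℕ) (hk : 1 ≤ k)
    (hlen : (6 / c) * (Real.log D + 1) ≤ (2 : ℝ) ^ k) :
    (1 - c / 3) ^ (4 ^ k - 1) ≤ (D ^ (2 ^ (k + 1)))⁻¹ := by
  have hD0 : (0 : ℝ) < D := lt_of_lt_of_le one_pos hD
  have hlogD : 0 ≤ Real.log D := Real.log_nonneg hD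
  have h2k : (2 : ℝ) ≤ (2 : ℝ) ^ k := by
    calc (2 : ℝ) = 2 ^ 1 := (pow_one 2).symm
    _ ≤ 2 ^ k := pow_le_pow_right₀ (by norm_num) hk
  -- from hlen: log D + 1 ≤ c * 2^k / 6
  have hlen' : Real.log D + 1 ≤ c * 2 ^ k / 6 := by
    calc Real.log D + 1 = (6 / c) * (Real.log D + 1) * (c / 6) := by
          field_simp
    _ ≤ (2 : ℝ) ^ k * (c / 6) := by
          apply mul_le_mul_of_nonneg_right hlen
          positivity
    _ = c * 2 ^ k / 6 := by ring
  -- cast of 4^k - 1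
  have h41 : (1 : ℕ) ≤ 4 ^ k := Nat.one_le_pow _ _ (by norm_num)
  have hcast : ((4 ^ k - 1 : ℕ) : ℝ) = (2 : ℝ) ^ k * 2 ^ k - 1 := by
    push_cast [Nat.cast_sub h41]
    norm_num
    rw [show (4 : ℝ) = 2 * 2 by norm_num, mul_pow]
  -- key inequality
  have hkey : (2 : ℝ) ^ (k + 1) * Real.log D ≤ c / 3 * ((2 : ℝ) ^ k * 2 ^ k - 1) := by
    have h1 : (2 : ℝ) ^ (k + 1) = 2 * 2 ^ k := by ring
    nlinarith [mul_le_mul_of_nonneg_left hlen' (le_of_lt (by positivity : (0:ℝ) < 2 * 2 ^ k)),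
      hc0.le, h2k, hlogD]
  -- exponential comparison
  have hx : (1 : ℝ) - c / 3 ≤ Real.exp (-(c / 3)) := by
    have := Real.add_one_le_exp (-(c / 3))
    linarith
  have hx0 : (0 : ℝ) ≤ 1 - c / 3 := by linarith
  calc (1 - c / 3) ^ (4 ^ k - 1)
      ≤ Real.exp (-(c / 3)) ^ (4 ^ k - 1) := pow_le_pow_left₀ hx0 hx _
    _ = Real.exp (((4 ^ k - 1 : ℕ) : ℝ) * (-(c / 3))) := by
        rw [← Real.exp_nat_mul]
    _ ≤ Real.exp (-((2 : ℝ) ^ (k + 1) * Real.log D)) := by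
        apply Real.exp_le_exp.mpr
        rw [hcast]
        nlinarith [hkey]
    _ = (D ^ (2 ^ (k + 1)))⁻¹ := by
        rw [Real.exp_neg]
        congr 1
        rw [show ((2 : ℝ) ^ (k + 1)) = ((2 ^ (k + 1) : ℕ) : ℝ) by push_cast; ring,
          Real.exp_nat_mul, Real.exp_log hD0]
end
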